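/- For all n ≥ 1, φⁿ(2) occurs as the middle third of φ^{n+1}(2); that is, φ^{n+1}(2) = σ(φⁿ(2)) · φⁿ(2) · ρ(φⁿ(2)), and in particular φⁿ(2) is a factor of φ^{n+1}(2) starting at position 3ⁿ. -/

import Mathlib

/-- Letters: `0,1,2` represent `1,2,3`. `sigmaM` exchanges letters 1 and 2. -/
def sigmaM : Fin 3 → Fin 3
  | 0 => 1
  | 1 => 0
  | 2 => 2

/-- `rhoM` exchanges letters 2 and 3. -/
def rhoM : Fin 3 → Fin 3
  | 0 => 0
  | 1 => 2
  | 2 => 1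

/-- `phi a = σ(a) · a · ρ(a)`. -/
def phi (a : List (Fin 3)) : List (Fin 3) := a.map sigmaM ++ a ++ a.map rhoM

/-- Kurosaki word `φⁿ(2)` (the letter 2 is encoded as `1 : Fin 3`). -/
def K (n : ℕ) : List (Fin 3) := phi^[n] [1]

/-- `w` has period `p`. -/
def HasPeriod (w : List (Fin 3)) (p : ℕ) : Prop :=
  0 < p ∧ ∀ i, i + p < w.length → w[i]! = w[i + p]!

def IsLeastPeriod (w : List (Fin 3)) (p : ℕ) : Prop :=
  HasPeriod w p ∧ ∀ q, HasPeriod w q → p ≤ q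

/-- every factor has exponent at most 7/4. -/
def Avoids74 (w : List (Fin 3)) : Prop :=
  ∀ x p, x <:+: w → x ≠ [] → IsLeastPeriod x p → 4 * x.length ≤ 7 * p

/-- `w` contains no nonempty factor of the form `x ++ x`. -/
def SqFree (w : List (Fin 3)) : Prop :=
  ∀ x : List (Fin 3), x ≠ [] → ¬ (x ++ x) <:+: w

/-- the triple of `w` at positions `3k, 3k+1, 3k+2` is a permutation of `123`. -/
def TripleDistinct (w : List (Fin 3)) : Prop :=
  ∀ k, 3 * k + 2 < w.length →
    w[3 * k]! ≠ w[3 * k + 1]! ∧ w[3 * k]! ≠ w[3 * k + 2]! ∧ w[3 * k + 1]! ≠ w[3 * k + 2]!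

lemma K_succ (n : ℕ) : K (n + 1) = phi (K n) :=
  Function.iterate_succ_apply' phi n [1]

lemma length_phi (a : List (Fin 3)) : (phi a).length = 3 * a.length := by
  simp only [phi, List.length_append, List.length_map]
  ring

lemma length_K (n : ℕ) : (K n).length = 3 ^ n := by
  induction n with
  | zero => rfl
  | succ n ih => rw [K_succ, length_phi, ih, pow_succ, mul_comm]

lemma phi_middle_third (a : List (Fin 3)) :
    ((phi a).drop a.length).take a.length = a := by
  rw [phi, List.append_assoc, List.drop_left' (List.length_map _),
    List.take_left' rfl]

theorem stmt13 : ∀ n : ℕ, 1 ≤ n →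
    K (n + 1) = (K n).map sigmaM ++ K n ++ (K n).map rhoM ∧
    (List.drop (3 ^ n) (K (n + 1))).take (3 ^ n) = K n := by
  intro n _
  rw [K_succ, ← length_K n]
  exact ⟨rfl, phi_middle_third (K n)⟩
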